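/- Let n ≥ 1, let m_1, …, m_{2n} be integers, h an integer, and σ a permutation of {1, …, 2n} with m_i + m_{σ(i)} = h for all i. Then for every integer k with 0 ≤ k ≤ n, one has |kh| ≤ Σ_{j=1}^{2n} |m_j|. -/
import Mathlib

theorem stmt_8 (n : ℕ) (hn : 1 ≤ n) (m : Fin (2 * n) → ℤ) (h : ℤ)
    (σ : Equiv.Perm (Fin (2 * n))) (hrel : ∀ i, m i + m (σ i) = h) :
    ∀ k : ℤ, 0 ≤ k → k ≤ (n : ℤ) → |k * h| ≤ ∑ j : Fin (2 * n), |m j| := by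
  have hsum : (2 : ℤ) * ∑ j : Fin (2 * n), m j = 2 * n * h := by
    have h1 : ∑ j : Fin (2 * n), (m j + m (σ j)) = ∑ j : Fin (2 * n), h := by
      exact Finset.sum_congr rfl fun i _ => hrel i
    have h2 : ∑ j : Fin (2 * n), m (σ j) = ∑ j : Fin (2 * n), m j :=
      Equiv.sum_comp σ m
    simp [Finset.sum_add_distrib, h2, Finset.sum_const, two_mul] at h1 ⊢
    linarith
  have hs : ∑ j : Fin (2 * n), m j = n * h := by linarith
  intro k hk0 hkn
  calc |k * h| = k * |h| := by rw [abs_mul, abs_of_nonneg hk0]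
    _ ≤ n * |h| := by exact mul_le_mul_of_nonneg_right hkn (abs_nonneg h)
    _ = |(n : ℤ) * h| := by rw [abs_mul, abs_of_nonneg (by positivity : (0:ℤ) ≤ n)]
    _ = |∑ j : Fin (2 * n), m j| := by rw [hs]
    _ ≤ ∑ j : Fin (2 * n), |m j| := Finset.abs_sum_le_sum_abs _ _
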